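/- Credit assignment correctness: in the credit protocol, when a signal s is emitted with a nonempty signal queue whose tail signal is s', the credit assigned to s (the number of data items emitted since s') equals the number of data items that the receiver must consume strictly between consuming s' and consuming s, in every execution in which both signals are consumed. -/

import Mathlib

/-- Events: data items, or signals recording the credit they were assigned and
whether they were emitted onto a nonempty signal queue (protocol rule 2). -/
inductive Ev
  | data (v : ℕ)
  | sig (id credit : ℕ) (nonemptyS : Bool)
deriving DecidableEq

/-- Channel state of the credit protocol with explicit FIFO queues and
emission/consumption logs. `S` pairs each queued signal event with its
remaining credit. -/
structure CState where
  emitted : List Ev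
  consumed : List Ev
  Q : List ℕ
  S : List (Ev × ℕ)
  c : ℕ
  k : ℕ

/-- Transitions of the credit protocol.  A signal emitted onto an empty signal
queue gets credit equal to the current data-queue length; a signal emitted
onto a nonempty signal queue gets credit equal to the number of data items
emitted since the previous signal. -/
inductive CStep : CState → CState → Prop
  | emitData (s : CState) (v : ℕ) :
      CStep s { s with emitted := s.emitted ++ [.data v],
                       Q := s.Q ++ [v], k := s.k + 1 }
  | emitSignal (s : CState) (i : ℕ) :
      CStep s { s with
        emitted := s.emitted ++
          [.sig i (if s.S = [] then s.Q.length else s.k) (!s.S.isEmpty)],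
        S := s.S ++
          [(.sig i (if s.S = [] then s.Q.length else s.k) (!s.S.isEmpty),
            if s.S = [] then s.Q.length else s.k)],
        k := 0 }
  | consumeData (s : CState) (v : ℕ) (Q' : List ℕ)
      (hQ : s.Q = v :: Q') (h : s.S = [] ∨ 0 < s.c) :
      CStep s { s with consumed := s.consumed ++ [.data v], Q := Q',
                       c := if s.S = [] then s.c else s.c - 1 }
  | transfer (s : CState) (e : Ev) (h : ℕ) (S' : List (Ev × ℕ))
      (hS : s.S = (e, h) :: S') (hc : s.c = 0) (hh : 0 < h) :
      CStep s { s with S := (e, 0) :: S', c := h }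
  | consumeSignal (s : CState) (e : Ev) (S' : List (Ev × ℕ))
      (hS : s.S = (e, 0) :: S') (hc : s.c = 0) :
      CStep s { s with consumed := s.consumed ++ [e], S := S' }

/-- Initial state. -/
def initC : CState := ⟨[], [], [], [], 0, 0⟩

/-! A signal emitted onto a nonempty signal queue receives credit `k`, and `k` always counts the
data items emitted since the last signal, so the claim holds for the sender's log `emitted`.
It transfers to the receiver because `consumed` is a prefix of `emitted`: the events in flight
are the data queue interleaved with the signal queue, each queued signal being preceded by as
many data items as its credit (plus the receiver's counter, for the head signal). -/

namespace CreditProtocol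

def nextCredit (s : CState) : ℕ := if s.S = [] then s.Q.length else s.k

def AllData (m : List Ev) : Prop := ∀ ev ∈ m, ∃ v, ev = Ev.data v

/-- `k` is the number of data items after the last signal of `l` (vacuous if `l` has no signal). -/
def TrailingData (l : List Ev) (k : ℕ) : Prop :=
  ∀ p m a ca fa, l = p ++ Ev.sig a ca fa :: m → AllData m → k = m.length

def CreditsMatch (l : List Ev) : Prop :=
  ∀ p m q a ca b cb fa, l = p ++ [Ev.sig a ca fa] ++ m ++ [Ev.sig b cb true] ++ q →
    AllData m → cb = m.length

lemma snoc_eq_append_cons {α : Type*} {l p m : List α} {x y : α}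
    (h : l ++ [x] = p ++ y :: m) :
    (l = p ∧ y = x ∧ m = []) ∨ ∃ m', l = p ++ y :: m' ∧ m = m' ++ [x] := by
  rcases m.eq_nil_or_concat with rfl | ⟨m', z, rfl⟩
  · obtain ⟨hl, hx⟩ := List.append_inj' h rfl
    simp_all
  · rw [List.concat_eq_append, ← List.cons_append, ← List.append_assoc] at h
    obtain ⟨hl, hx⟩ := List.append_inj' h rfl
    simp_all

lemma TrailingData.snoc_data {l : List Ev} {k : ℕ} (h : TrailingData l k) (v : ℕ) :
    TrailingData (l ++ [Ev.data v]) (k + 1) := by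
  intro p m a ca fa hl hm
  rcases snoc_eq_append_cons hl with ⟨-, hsig, -⟩ | ⟨m', hl', rfl⟩
  · cases hsig
  · simp [h p m' a ca fa hl' fun ev hev => hm ev (by simp [hev])]

lemma TrailingData.snoc_sig (l : List Ev) (i c : ℕ) (f : Bool) :
    TrailingData (l ++ [Ev.sig i c f]) 0 := by
  intro p m a ca fa hl hm
  rcases snoc_eq_append_cons hl with ⟨-, -, rfl⟩ | ⟨m', -, rfl⟩
  · rfl
  · obtain ⟨v, hv⟩ := hm (Ev.sig i c f) (by simp)
    cases hv

lemma CreditsMatch.snoc {l : List Ev} (h : CreditsMatch l) {x : Ev}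
    (hx : ∀ b cb, x = Ev.sig b cb true → TrailingData l cb) :
    CreditsMatch (l ++ [x]) := by
  intro p m q a ca b cb fa hl hm
  rcases q.eq_nil_or_concat with rfl | ⟨q', y, rfl⟩
  · have hl' : l ++ [x] = (p ++ [Ev.sig a ca fa] ++ m) ++ [Ev.sig b cb true] := by
      simpa using hl
    obtain ⟨hl'', hx'⟩ := List.append_inj' hl' rfl
    exact hx b cb (by simpa using hx') p m a ca fa (by simpa using hl'') hm
  · have hl' : l ++ [x] = (p ++ [Ev.sig a ca fa] ++ m ++ [Ev.sig b cb true] ++ q') ++ [y] := by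
      simpa using hl
    exact h p m q' a ca b cb fa (List.append_inj' hl' rfl).1 hm

/-- `InFlight c S Q k r`: the events emitted but not yet consumed are `r`, the data queue `Q`
interleaved with the signals of `S`. The head signal of `S` is preceded by `c` plus its
remaining credit data items, every later signal by its credit, and `k` data items follow the
last signal. -/
inductive InFlight : ℕ → List (Ev × ℕ) → List ℕ → ℕ → List Ev → Prop
  | nil (Q : List ℕ) : InFlight 0 [] Q Q.length (Q.map .data)
  | cons {c h k : ℕ} {e : Ev} {S : List (Ev × ℕ)} {q Q : List ℕ} {r : List Ev}
      (hq : q.length = c + h) (hS : InFlight 0 S Q k r) :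
      InFlight c ((e, h) :: S) (q ++ Q) k (q.map .data ++ e :: r)

namespace InFlight

variable {c h k : ℕ} {e : Ev} {S : List (Ev × ℕ)} {Q : List ℕ} {r : List Ev}

lemma nil_inv (hf : InFlight c [] Q k r) : c = 0 ∧ k = Q.length ∧ r = Q.map .data := by
  cases hf; exact ⟨rfl, rfl, rfl⟩

lemma cons_inv (hf : InFlight c ((e, h) :: S) Q k r) :
    ∃ q Q' r', Q = q ++ Q' ∧ r = q.map .data ++ e :: r' ∧ q.length = c + h ∧
      InFlight 0 S Q' k r' := by
  cases hf with
  | cons hq hS => exact ⟨_, _, _, rfl, rfl, hq, hS⟩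

lemma snoc_data (hf : InFlight c S Q k r) (v : ℕ) :
    InFlight c S (Q ++ [v]) (k + 1) (r ++ [.data v]) := by
  induction hf with
  | nil Q => simpa using nil (Q ++ [v])
  | cons hq _ ih => simpa using cons hq ih

lemma snoc_sig (hf : InFlight c S Q k r) (e : Ev) :
    InFlight c (S ++ [(e, k)]) Q 0 (r ++ [e]) := by
  induction hf with
  | nil Q => simpa using cons (e := e) (Q := []) (by simp) (nil [])
  | cons hq _ ih => simpa using cons hq ih

lemma consume_data {v : ℕ} (hf : InFlight c ((e, h) :: S) (v :: Q) k r) (hc : 0 < c) :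
    ∃ r', r = .data v :: r' ∧ InFlight (c - 1) ((e, h) :: S) Q k r' := by
  obtain ⟨_ | ⟨w, q⟩, Q', r', hQ, rfl, hq, hS⟩ := hf.cons_inv
  · simp at hq; omega
  · obtain ⟨rfl, rfl⟩ := List.cons_eq_cons.mp hQ
    exact ⟨_, rfl, cons (by simp at hq; omega) hS⟩

lemma transfer (hf : InFlight 0 ((e, h) :: S) Q k r) : InFlight h ((e, 0) :: S) Q k r := by
  obtain ⟨q, Q', r', rfl, rfl, hq, hS⟩ := hf.cons_inv
  exact cons (by omega) hS

lemma consume_sig (hf : InFlight 0 ((e, 0) :: S) Q k r) :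
    ∃ r', r = e :: r' ∧ InFlight 0 S Q k r' := by
  obtain ⟨q, Q', r', rfl, rfl, hq, hS⟩ := hf.cons_inv
  obtain rfl : q = [] := List.eq_nil_of_length_eq_zero hq
  exact ⟨r', rfl, hS⟩

end InFlight

lemma creditsMatch_and_trailingData_of_reachable {s : CState}
    (hreach : Relation.ReflTransGen CStep initC s) :
    CreditsMatch s.emitted ∧ TrailingData s.emitted s.k := by
  induction hreach with
  | refl =>
    exact ⟨fun _ _ _ _ _ _ _ _ h => by simp [initC] at h,
      fun _ _ _ _ _ h => by simp [initC] at h⟩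
  | @tail t _ _ hstep ih =>
    obtain ⟨hcred, htrail⟩ := ih
    cases hstep with
    | emitData v =>
      exact ⟨hcred.snoc (by simp), htrail.snoc_data v⟩
    | emitSignal i =>
      refine ⟨hcred.snoc ?_, TrailingData.snoc_sig _ _ _ _⟩
      intro b cb hsig
      obtain ⟨-, rfl, hflag⟩ := Ev.sig.inj hsig
      have hS : t.S ≠ [] := by simpa using hflag
      simpa [hS] using htrail
    | _ => exact ⟨hcred, htrail⟩

lemma exists_inFlight_of_reachable {s : CState} (hreach : Relation.ReflTransGen CStep initC s) :
    ∃ r, InFlight s.c s.S s.Q (nextCredit s) r ∧ s.emitted = s.consumed ++ r := by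
  induction hreach with
  | refl => exact ⟨[], InFlight.nil [], rfl⟩
  | @tail t _ _ hstep ih =>
    obtain ⟨r, hf, hemit⟩ := ih
    cases hstep with
    | emitData v =>
      refine ⟨r ++ [.data v], ?_, by simp [hemit]⟩
      by_cases hS : t.S = []
      · simp only [nextCredit, hS, if_true] at hf ⊢
        simpa using hf.snoc_data v
      · simp only [nextCredit, hS, if_false] at hf ⊢
        exact hf.snoc_data v
    | emitSignal i =>
      refine ⟨r ++ [.sig i (nextCredit t) !t.S.isEmpty], ?_, by simp [hemit, nextCredit]⟩
      simp only [nextCredit, List.append_eq_nil_iff, List.cons_ne_nil, and_false, if_false]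
      exact hf.snoc_sig _
    | consumeData v Q' hQ hc =>
      rcases hS : t.S with _ | ⟨⟨e, h⟩, S'⟩
      · simp only [nextCredit, hS, hQ, if_true] at hf ⊢
        obtain ⟨hc0, -, rfl⟩ := hf.nil_inv
        exact ⟨Q'.map .data, hc0 ▸ InFlight.nil Q', by simp [hemit]⟩
      · simp only [nextCredit, hS, hQ, reduceCtorEq, if_false] at hf hc ⊢
        obtain ⟨r', rfl, hf'⟩ := hf.consume_data (by simpa using hc)
        exact ⟨r', hf', by simp [hemit]⟩
    | transfer e h S' hS hc _ =>
      simp only [nextCredit, hS, hc, reduceCtorEq, if_false] at hf ⊢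
      exact ⟨r, hf.transfer, hemit⟩
    | consumeSignal e S' hS hc =>
      simp only [nextCredit, hS, hc, reduceCtorEq, if_false] at hf ⊢
      obtain ⟨r', rfl, hf'⟩ := hf.consume_sig
      refine ⟨r', ?_, by simp [hemit]⟩
      split_ifs with hS'
      · subst hS'
        obtain ⟨-, hk, -⟩ := hf'.nil_inv
        exact hk ▸ hf'
      · exact hf'

theorem consumed_prefix_emitted {s : CState} (hreach : Relation.ReflTransGen CStep initC s) :
    s.consumed <+: s.emitted :=
  let ⟨r, _, hemit⟩ := exists_inFlight_of_reachable hreach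
  ⟨r, hemit.symm⟩

end CreditProtocol

/-- credit assignment correctness: if, in a reachable state, the
receiver has consumed two signals `s'` (id `a`) and `s` (id `b`) with only
data items `m` consumed strictly between them, and `s` was emitted while the
signal queue was nonempty (so its credit was the number of data items emitted
since `s'`), then the credit `cb` carried by `s` equals the number of data
items consumed strictly between `s'` and `s` (which, by precise delivery,
equals the number of data items emitted between them). -/
theorem credit_assignment_correct (s : CState)
    (hreach : Relation.ReflTransGen CStep initC s)
    (p m q : List Ev) (a ca b cb : ℕ) (fa : Bool)
    (hcons : s.consumed = p ++ [.sig a ca fa] ++ m ++ [.sig b cb true] ++ q)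
    (hm : ∀ ev ∈ m, ∃ v, ev = Ev.data v) :
    cb = m.length := by
  obtain ⟨r, hemit⟩ := CreditProtocol.consumed_prefix_emitted hreach
  have hlog := (CreditProtocol.creditsMatch_and_trailingData_of_reachable hreach).1
  exact hlog p m (q ++ r) a ca b cb fa (by rw [← hemit, hcons]; simp) hm
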